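/- Let e : ℂ → ℂ be entire and let γ ∈ (0, π). Set ĕ(z) := −s_γ(z) − i·s₀(z). Then for every z ∈ ℂ, ĕ(z) = ((1 − e^{i(γ+π/2)})/2)·e(z) − ((1 − e^{−i(γ−π/2)})/2)·e#(z). Moreover the constants satisfy |(1 − e^{i(γ+π/2)})/2| > √2/2 and |1 − e^{−i(γ−π/2)}| < |1 − e^{i(γ+π/2)}|. -/

import Mathlib

open Complex ComplexConjugate Real

noncomputable section

/-- `e#(z) := conj (e (conj z))`. -/
def esharp (e : ℂ → ℂ) (z : ℂ) : ℂ := conj (e (conj z))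

/-- An entire function `e` is of Hermite-Biehler class if it has no zeros in the open
upper half-plane and `|e(z)| > |e#(z)|` there. -/
def HermiteBiehler (e : ℂ → ℂ) : Prop :=
  Differentiable ℂ e ∧ (∀ z : ℂ, 0 < z.im → e z ≠ 0) ∧
    ∀ z : ℂ, 0 < z.im → ‖esharp e z‖ < ‖e z‖

/-- `s_β(z) := (i/2) (e^{iβ} e(z) - e^{-iβ} e#(z))`. -/
def sfun (e : ℂ → ℂ) (β : ℝ) (z : ℂ) : ℂ :=
  (Complex.I / 2) * (Complex.exp (Complex.I * β) * e z
    - Complex.exp (-(Complex.I * β)) * esharp e z)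

/-! Rotating by `π/2` gives `e^{i(γ+π/2)} = i e^{iγ}` and `e^{-i(γ-π/2)} = i e^{-iγ}`, after which the
identity is a linear relation between `e` and `e#`. Since `|1 - e^{iθ}|² = 2 - 2 cos θ`, the two
moduli squared are `2 + 2 sin γ` and `2 - 2 sin γ`, and `sin γ > 0` on `(0, π)`. -/

lemma exp_I_mul_add_pi_div_two (x : ℂ) : exp (I * (x + π / 2)) = I * exp (I * x) := by
  rw [mul_add, Complex.exp_add, mul_comm I (π / 2 : ℂ), exp_pi_div_two_mul_I, mul_comm]

lemma exp_neg_I_mul_sub_pi_div_two (x : ℂ) : exp (-(I * (x - π / 2))) = I * exp (-(I * x)) := by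
  rw [show -(I * (x - π / 2)) = π / 2 * I + -(I * x) by ring, Complex.exp_add, exp_pi_div_two_mul_I]

lemma neg_sfun_sub_I_mul_sfun_zero (e : ℂ → ℂ) (γ : ℝ) (z : ℂ) :
    -sfun e γ z - I * sfun e 0 z =
      ((1 - exp (I * (γ + π / 2))) / 2) * e z
        - ((1 - exp (-(I * (γ - π / 2)))) / 2) * esharp e z := by
  simp only [sfun, exp_I_mul_add_pi_div_two, exp_neg_I_mul_sub_pi_div_two, ofReal_zero, mul_zero,
    neg_zero, Complex.exp_zero]
  linear_combination (esharp e z - e z) / 2 * I_sq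

lemma norm_one_sub_exp_I_mul_sq (θ : ℝ) : ‖1 - exp (I * θ)‖ ^ 2 = 2 - 2 * Real.cos θ := by
  rw [norm_sub_rev, norm_exp_I_mul_ofReal_sub_one, Real.norm_eq_abs, sq_abs, mul_pow,
    Real.sin_sq_eq_half_sub, show 2 * (θ / 2) = θ by ring]
  ring

lemma norm_one_sub_exp_I_mul_add_pi_div_two_sq (γ : ℝ) :
    ‖1 - exp (I * (γ + π / 2))‖ ^ 2 = 2 + 2 * Real.sin γ := by
  have := norm_one_sub_exp_I_mul_sq (γ + π / 2)
  rw [Real.cos_add_pi_div_two] at this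
  push_cast at this
  linarith

lemma norm_one_sub_exp_neg_I_mul_sub_pi_div_two_sq (γ : ℝ) :
    ‖1 - exp (-(I * (γ - π / 2)))‖ ^ 2 = 2 - 2 * Real.sin γ := by
  rw [show -(I * (γ - π / 2 : ℂ)) = I * ((π / 2 - γ : ℝ) : ℂ) by push_cast; ring,
    norm_one_sub_exp_I_mul_sq, Real.cos_pi_div_two_sub]

theorem breve_identity_and_constants_general
    (e : ℂ → ℂ)
    (γ : ℝ) (hγ : γ ∈ Set.Ioo 0 π) :
    (∀ z : ℂ, -sfun e γ z - Complex.I * sfun e 0 z =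
      ((1 - Complex.exp (Complex.I * (γ + π / 2))) / 2) * e z
        - ((1 - Complex.exp (-(Complex.I * (γ - π / 2)))) / 2) * esharp e z) ∧
    Real.sqrt 2 / 2 < ‖(1 - Complex.exp (Complex.I * (γ + π / 2))) / 2‖ ∧
    ‖1 - Complex.exp (-(Complex.I * (γ - π / 2)))‖ <
      ‖1 - Complex.exp (Complex.I * (γ + π / 2))‖ := by
  have hsin : 0 < Real.sin γ := Real.sin_pos_of_pos_of_lt_pi hγ.1 hγ.2
  refine ⟨neg_sfun_sub_I_mul_sfun_zero e γ, ?_, ?_⟩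
  · rw [norm_div, Complex.norm_two, div_lt_div_iff_of_pos_right two_pos]
    refine lt_of_pow_lt_pow_left₀ 2 (norm_nonneg _) ?_
    rw [Real.sq_sqrt zero_le_two, norm_one_sub_exp_I_mul_add_pi_div_two_sq]
    linarith
  · refine lt_of_pow_lt_pow_left₀ 2 (norm_nonneg _) ?_
    rw [norm_one_sub_exp_I_mul_add_pi_div_two_sq, norm_one_sub_exp_neg_I_mul_sub_pi_div_two_sq]
    linarith

/-- The algebraic identity behind Lemma 3.5: `ĕ = c₁·e - c₂·e#` with
`c₁ = (1 - e^{i(γ+π/2)})/2`, `c₂ = (1 - e^{-i(γ-π/2)})/2`, where `|c₁| > √2/2` and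
`|1 - e^{-i(γ-π/2)}| < |1 - e^{i(γ+π/2)}|` for `γ ∈ (0,π)`. -/
theorem breve_identity_and_constants
    (e : ℂ → ℂ) (he : Differentiable ℂ e)
    (γ : ℝ) (hγ : γ ∈ Set.Ioo 0 π) :
    (∀ z : ℂ, -sfun e γ z - Complex.I * sfun e 0 z =
      ((1 - Complex.exp (Complex.I * (γ + π / 2))) / 2) * e z
        - ((1 - Complex.exp (-(Complex.I * (γ - π / 2)))) / 2) * esharp e z) ∧
    Real.sqrt 2 / 2 < ‖(1 - Complex.exp (Complex.I * (γ + π / 2))) / 2‖ ∧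
    ‖1 - Complex.exp (-(Complex.I * (γ - π / 2)))‖ <
      ‖1 - Complex.exp (Complex.I * (γ + π / 2))‖ :=
  breve_identity_and_constants_general e γ hγ

end
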